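/- arXiv:0706.0611 — 2 statements merged into one kernel-verified Lean document; each statement's English description precedes it below -/
import Mathlib

section
/- (Lemma bounding the product representation.) Fix θ > 2, γ ∈ (0,1) and δ > 0. There exists a constant C = C(θ,γ,δ) > 0 such that for all K₂, K₃ > 1 there is β₀ = β₀(K₂,K₃) > 0 with the following property for all 0 < β ≤ β₀: for every integer j ≥ 1, every real a with 0 ≤ a ≤ γ j^{−1} log j, every sequence of reals v_0 = 1, v_1, …, v_j with |v_i − v_{i−1}| ≤ K₂βi^{−θ+1} for 1 ≤ i ≤ j, and every complex numbers r_1, …, r_j with |r_i| ≤ K₃β(i^{−θ+1} + a·i^{−δ}) for 1 ≤ i ≤ j, one has |∏_{i=1}^j (1 − v_i a + r_i)| ≤ e^{CK₃β} · e^{−(1 − C(K₂+K₃)β) j a}. -/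
/-!
Each factor satisfies `‖1 - vᵢ a + rᵢ‖ ≤ 1 - vᵢ a + ‖rᵢ‖ ≤ exp (-vᵢ a + ‖rᵢ‖)` as long as
`vᵢ a ≤ 1`. Telescoping the increments of `v`, which are summable since `θ > 2`, keeps every `vᵢ`
within `K₂ β S` of `1`, where `S = ∑ n ^ (1 - θ)`; together with `a ≤ log j / j ≤ 1 / 2` this gives
`vᵢ a ≤ 1` once `β ≤ 1 / (K₂ S)`. Summing the exponents, `∑ vᵢ ≥ j (1 - K₂ β S)` and
`∑ ‖rᵢ‖ ≤ K₃ β (S + j a)`, so `C = S + 1` works.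
-/

open Finset

namespace Real

theorem log_le_half_self {x : ℝ} (hx : 0 ≤ x) : log x ≤ x / 2 := by
  rcases hx.eq_or_lt with rfl | hx
  · simp
  have hlog : log x = 2 * log (√x) := by rw [log_sqrt hx.le]; ring
  have hsqrt : log (√x) ≤ √x - 1 := log_le_sub_one_of_pos (sqrt_pos.mpr hx)
  nlinarith [sq_nonneg (√x - 2), sq_sqrt hx.le]

theorem mul_inv_mul_log_le_half {γ x : ℝ} (hγ : γ ≤ 1) (hx : 1 ≤ x) :
    γ * x⁻¹ * log x ≤ 1 / 2 := by
  have hx0 : 0 < x := by linarith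
  calc γ * x⁻¹ * log x ≤ 1 * x⁻¹ * log x := by
        gcongr
        exact log_nonneg hx
    _ ≤ x⁻¹ * (x / 2) := by rw [one_mul]; gcongr; exact log_le_half_self hx0.le
    _ = 1 / 2 := by field_simp

end Real

theorem abs_sub_le_sum_Icc_of_abs_sub_pred_le {v b : ℕ → ℝ} {j : ℕ}
    (hv : ∀ i, 1 ≤ i → i ≤ j → |v i - v (i - 1)| ≤ b i) :
    ∀ i ≤ j, |v i - v 0| ≤ ∑ k ∈ Icc 1 i, b k := by
  intro i
  induction i with
  | zero => simp
  | succ n ih =>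
    intro hn
    rw [sum_Icc_succ_top (by omega)]
    calc |v (n + 1) - v 0| ≤ |v (n + 1) - v n| + |v n - v 0| := abs_sub_le _ _ _
      _ ≤ b (n + 1) + ∑ k ∈ Icc 1 n, b k := add_le_add (hv (n + 1) (by omega) hn) (ih (by omega))
      _ = _ := add_comm _ _

theorem sum_Icc_rpow_neg_le {δ : ℝ} (hδ : 0 ≤ δ) (j : ℕ) :
    ∑ i ∈ Icc 1 j, (i : ℝ) ^ (-δ) ≤ j := by
  calc ∑ i ∈ Icc 1 j, (i : ℝ) ^ (-δ) ≤ ∑ _i ∈ Icc 1 j, (1 : ℝ) := by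
        refine sum_le_sum fun i hi => Real.rpow_le_one_of_one_le_of_nonpos ?_ (by linarith)
        exact_mod_cast (mem_Icc.mp hi).1
    _ = j := by simp

theorem exists_one_le_forall_sum_Icc_rpow_le {p : ℝ} (hp : p < -1) :
    ∃ S : ℝ, 1 ≤ S ∧ ∀ i : ℕ, ∑ k ∈ Icc 1 i, (k : ℝ) ^ p ≤ S := by
  have hsum : Summable (fun n : ℕ => (n : ℝ) ^ p) := Real.summable_nat_rpow.mpr hp
  refine ⟨∑' n : ℕ, (n : ℝ) ^ p, ?_, fun i => hsum.sum_le_tsum _ fun k _ => by positivity⟩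
  simpa using hsum.le_tsum 1 fun k _ => by positivity

theorem norm_ofReal_one_sub_add_le_exp {𝕜 : Type*} [RCLike 𝕜] {x : ℝ} (hx : x ≤ 1) (z : 𝕜) :
    ‖((1 - x : ℝ) : 𝕜) + z‖ ≤ Real.exp (-x + ‖z‖) :=
  calc ‖((1 - x : ℝ) : 𝕜) + z‖ ≤ ‖((1 - x : ℝ) : 𝕜)‖ + ‖z‖ := norm_add_le _ _
    _ = (-x + ‖z‖) + 1 := by rw [RCLike.norm_ofReal, abs_of_nonneg (by linarith)]; ring
    _ ≤ Real.exp (-x + ‖z‖) := Real.add_one_le_exp _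

theorem norm_prod_ofReal_one_sub_mul_add_le_exp {ι 𝕜 : Type*} [RCLike 𝕜] (s : Finset ι)
    {v : ι → ℝ} {a : ℝ} (hva : ∀ i ∈ s, v i * a ≤ 1) (r : ι → 𝕜) :
    ‖∏ i ∈ s, (((1 - v i * a : ℝ) : 𝕜) + r i)‖ ≤
      Real.exp (-(∑ i ∈ s, v i) * a + ∑ i ∈ s, ‖r i‖) :=
  calc ‖∏ i ∈ s, (((1 - v i * a : ℝ) : 𝕜) + r i)‖
      = ∏ i ∈ s, ‖((1 - v i * a : ℝ) : 𝕜) + r i‖ := norm_prod _ _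
    _ ≤ ∏ i ∈ s, Real.exp (-(v i * a) + ‖r i‖) :=
        prod_le_prod (fun _ _ => norm_nonneg _)
          fun i hi => norm_ofReal_one_sub_add_le_exp (hva i hi) (r i)
    _ = Real.exp (-(∑ i ∈ s, v i) * a + ∑ i ∈ s, ‖r i‖) := by
        rw [← Real.exp_sum, sum_add_distrib, sum_neg_distrib, neg_mul, sum_mul]

theorem sum_Icc_norm_le_of_norm_le_rpow {E : Type*} [SeminormedAddCommGroup E] {r : ℕ → E}
    {c a p δ S : ℝ} {j : ℕ} (hc : 0 ≤ c) (ha : 0 ≤ a) (hδ : 0 ≤ δ)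
    (hS : ∑ i ∈ Icc 1 j, (i : ℝ) ^ p ≤ S)
    (hr : ∀ i, 1 ≤ i → i ≤ j → ‖r i‖ ≤ c * ((i : ℝ) ^ p + a * (i : ℝ) ^ (-δ))) :
    ∑ i ∈ Icc 1 j, ‖r i‖ ≤ c * (S + a * j) :=
  calc ∑ i ∈ Icc 1 j, ‖r i‖ ≤ ∑ i ∈ Icc 1 j, c * ((i : ℝ) ^ p + a * (i : ℝ) ^ (-δ)) :=
        sum_le_sum fun i hi => hr i (mem_Icc.mp hi).1 (mem_Icc.mp hi).2
    _ = c * (∑ i ∈ Icc 1 j, (i : ℝ) ^ p + a * ∑ i ∈ Icc 1 j, (i : ℝ) ^ (-δ)) := by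
        rw [← mul_sum, sum_add_distrib, ← mul_sum]
    _ ≤ c * (S + a * j) := by
        gcongr
        exact sum_Icc_rpow_neg_le hδ j

/-- (Lemma bounding the product representation.)
Fix `θ > 2`, `γ ∈ (0,1)` and `δ > 0`.  There exists a constant `C = C(θ,γ,δ) > 0` such that
for all `K₂, K₃ > 1` there is `β₀ = β₀(K₂,K₃) > 0` with the following property for all
`0 < β ≤ β₀`: for every integer `j ≥ 1`, every real `a` with `0 ≤ a ≤ γ j^{−1} log j`, every
sequence of reals `v 0 = 1, v 1, …, v j` with `|v i − v (i−1)| ≤ K₂βi^{−θ+1}` for `1 ≤ i ≤ j`,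
and every complex numbers `r 1, …, r j` with `|r i| ≤ K₃β(i^{−θ+1} + a·i^{−δ})` for
`1 ≤ i ≤ j`, one has
`|∏_{i=1}^j (1 − v i · a + r i)| ≤ e^{CK₃β} · e^{−(1 − C(K₂+K₃)β) j a}`. -/
theorem product_representation_bound (θ γ δ : ℝ) (hθ : 2 < θ)
    (hγ : γ ∈ Set.Ioo (0 : ℝ) 1) (hδ : 0 < δ) :
    ∃ C : ℝ, 0 < C ∧ ∀ K₂ K₃ : ℝ, 1 < K₂ → 1 < K₃ → ∃ β₀ : ℝ, 0 < β₀ ∧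
      ∀ β : ℝ, 0 < β → β ≤ β₀ →
        ∀ j : ℕ, 1 ≤ j → ∀ a : ℝ, 0 ≤ a → a ≤ γ * (j : ℝ)⁻¹ * Real.log j →
          ∀ v : ℕ → ℝ, v 0 = 1 →
            (∀ i : ℕ, 1 ≤ i → i ≤ j → |v i - v (i - 1)| ≤ K₂ * β * (i : ℝ) ^ (-θ + 1)) →
            ∀ r : ℕ → ℂ,
              (∀ i : ℕ, 1 ≤ i → i ≤ j →
                ‖r i‖ ≤ K₃ * β * ((i : ℝ) ^ (-θ + 1) + a * (i : ℝ) ^ (-δ))) →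
              ‖∏ i ∈ Finset.Icc 1 j, (((1 - v i * a : ℝ) : ℂ) + r i)‖ ≤
                Real.exp (C * K₃ * β) * Real.exp (-(1 - C * (K₂ + K₃) * β) * j * a) := by
  obtain ⟨S, hS, hpartial⟩ := exists_one_le_forall_sum_Icc_rpow_le (by linarith : -θ + 1 < -1)
  refine ⟨S + 1, by positivity, fun K₂ K₃ hK₂ hK₃ => ⟨1 / (K₂ * S), by positivity, ?_⟩⟩
  intro β hβ hβ₀ j hj a ha ha_le v hv0 hv r hr
  have hε : K₂ * β * S ≤ 1 := by
    have := (le_div_iff₀ (by positivity)).mp hβ₀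
    linarith
  have hv1 : ∀ i ≤ j, |v i - 1| ≤ K₂ * β * S := fun i hi =>
    calc |v i - 1| ≤ ∑ k ∈ Icc 1 i, K₂ * β * (k : ℝ) ^ (-θ + 1) := by
          simpa only [hv0] using abs_sub_le_sum_Icc_of_abs_sub_pred_le hv i hi
      _ ≤ K₂ * β * S := by rw [← mul_sum]; gcongr; exact hpartial i
  have hva : ∀ i ∈ Icc 1 j, v i * a ≤ 1 := fun i hi => by
    have ha2 : a ≤ 1 / 2 :=
      ha_le.trans (Real.mul_inv_mul_log_le_half hγ.2.le (by exact_mod_cast hj))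
    have := abs_le.mp (hv1 i (mem_Icc.mp hi).2)
    nlinarith
  have hsum_v : j * (1 - K₂ * β * S) ≤ ∑ i ∈ Icc 1 j, v i := by
    simpa using card_nsmul_le_sum (Icc 1 j) v (1 - K₂ * β * S)
      fun i hi => by linarith [(abs_le.mp (hv1 i (mem_Icc.mp hi).2)).1]
  have hsum_r : ∑ i ∈ Icc 1 j, ‖r i‖ ≤ K₃ * β * (S + a * j) :=
    sum_Icc_norm_le_of_norm_le_rpow (by positivity) ha hδ.le (hpartial j) hr
  refine (norm_prod_ofReal_one_sub_mul_add_le_exp _ hva r).trans ?_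
  rw [← Real.exp_add, Real.exp_le_exp]
  have hx : 0 ≤ β * j * a := by positivity
  nlinarith [mul_le_mul_of_nonneg_right hsum_v ha, mul_nonneg hx (by linarith : (0 : ℝ) ≤ K₂),
    mul_nonneg hx (by linarith : (0 : ℝ) ≤ K₃), mul_nonneg hβ.le (by linarith : (0 : ℝ) ≤ K₃)]
end

section
/- (Radial integral estimate for the region R₃.) Let d ≥ 1 be an integer and let p ≥ 1, θ > 2, 0 < λ < θ and c₁, c₂ > 0 be reals. Then there exists a constant C = C(d,p,θ,λ,c₁,c₂) > 0 such that for all integers j ≥ 2 and all reals L ≥ 1: j^{−θp} L^{−2λp} ∫_{r₀}^{c₂/L} r^{d−1−2λp} dr ≤ C L^{−d} j^{−((d/2) ∧ (θp))}, where r₀ = √(c₁ (log j)/(L²j)) and the integral is interpreted as 0 when r₀ ≥ c₂/L. -/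
open MeasureTheory Real Set

/-! Write `α = d - 2λp`. If `2θp ≤ d` then `α > 0`, and the integral is at most its value
`(c₂/L)^α / α` over `(0, c₂/L]`. If `d < 2θp`, compare with the exponent `γ = d - 2θp < 0`,
which is `≤ α` because `λ < θ`: on `(r₀, c₂/L]` one has `r^(α-1) ≤ (c₂/L)^(α-γ) r^(γ-1)`, and
`∫_{r₀}^∞ r^(γ-1) dr = r₀^γ / (-γ)` with `r₀ ≥ √(c₁ log 2) / (L √j)`. In both cases the powers of
`L` combine to `L^(-d)`, and no logarithmic case `d = 2λp` arises. -/

theorem integrableOn_Ioc_rpow {a : ℝ} (ha : 0 < a) (b s : ℝ) :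
    IntegrableOn (fun r : ℝ => r ^ s) (Ioc a b) :=
  ((continuousOn_id.rpow_const fun _ hr => Or.inl (ha.trans_le hr.1).ne').integrableOn_Icc).mono_set
    Ioc_subset_Icc_self

theorem setIntegral_Ioc_rpow_le_rpow_mul {a b α γ : ℝ} (ha : 0 < a) (hγα : γ ≤ α) :
    ∫ r in Ioc a b, r ^ α ≤ b ^ (α - γ) * ∫ r in Ioc a b, r ^ γ := by
  rw [← integral_const_mul]
  refine setIntegral_mono_on (integrableOn_Ioc_rpow ha b α)
    ((integrableOn_Ioc_rpow ha b γ).const_mul _) measurableSet_Ioc fun r hr => ?_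
  have hr0 : 0 < r := ha.trans hr.1
  calc r ^ α = r ^ (α - γ) * r ^ γ := by rw [← rpow_add hr0, sub_add_cancel]
    _ ≤ b ^ (α - γ) * r ^ γ := by gcongr; exact hr.2

theorem setIntegral_Ioc_rpow_sub_one_le_of_neg {a γ : ℝ} (ha : 0 < a) (hγ : γ < 0) (b : ℝ) :
    ∫ r in Ioc a b, r ^ (γ - 1) ≤ a ^ γ / -γ := by
  have hγ1 : γ - 1 < -1 := by linarith
  calc ∫ r in Ioc a b, r ^ (γ - 1) ≤ ∫ r in Ioi a, r ^ (γ - 1) :=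
        setIntegral_mono_set (integrableOn_Ioi_rpow_of_lt hγ1 ha)
          ((ae_restrict_iff' measurableSet_Ioi).2 <| .of_forall fun r hr =>
            rpow_nonneg (ha.trans hr).le _)
          Ioc_subset_Ioi_self.eventuallyLE
    _ = a ^ γ / -γ := by rw [integral_Ioi_rpow_of_lt hγ1 ha, sub_add_cancel, neg_div, div_neg]

theorem setIntegral_Ioc_rpow_sub_one_le_of_pos {a b γ : ℝ} (ha : 0 ≤ a) (hb : 0 ≤ b) (hγ : 0 < γ) :
    ∫ r in Ioc a b, r ^ (γ - 1) ≤ b ^ γ / γ := by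
  have hγ1 : -1 < γ - 1 := by linarith
  calc ∫ r in Ioc a b, r ^ (γ - 1) ≤ ∫ r in Ioc 0 b, r ^ (γ - 1) :=
        setIntegral_mono_set ((intervalIntegral.intervalIntegrable_rpow' hγ1).1)
          ((ae_restrict_iff' measurableSet_Ioc).2 <| .of_forall fun r hr =>
            rpow_nonneg hr.1.le _)
          (Ioc_subset_Ioc_left ha).eventuallyLE
    _ = b ^ γ / γ := by
      rw [← intervalIntegral.integral_of_le hb, integral_rpow (Or.inl hγ1), sub_add_cancel,
        zero_rpow hγ.ne', sub_zero]

theorem sqrt_mul_log_two_mul_inv_le_sqrt_mul_log_div {c₁ L : ℝ} {j : ℕ} (hc₁ : 0 ≤ c₁) (hL : 0 < L)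
    (hj : 2 ≤ j) :
    √(c₁ * log 2) * L⁻¹ * (j : ℝ) ^ (-(1 / 2) : ℝ) ≤ √(c₁ * log j / (L ^ 2 * j)) := by
  have hj0 : (0 : ℝ) < j := by positivity
  calc √(c₁ * log 2) * L⁻¹ * (j : ℝ) ^ (-(1 / 2) : ℝ) = √(c₁ * log 2 / (L ^ 2 * j)) := by
        rw [sqrt_div' _ (by positivity), sqrt_mul' _ hj0.le, sqrt_sq hL.le, rpow_neg hj0.le,
          ← sqrt_eq_rpow, div_eq_mul_inv, mul_inv, mul_assoc]
    _ ≤ √(c₁ * log j / (L ^ 2 * j)) := by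
      gcongr
      exact_mod_cast hj

section RadialIntegral

variable {d p θ lam c₁ c₂ L : ℝ} {j : ℕ}

theorem radial_integral_le_of_d_lt (hp : 0 ≤ p) (hlamθ : lam ≤ θ) (hdθ : d < 2 * θ * p)
    (hc₁ : 0 < c₁) (hc₂ : 0 < c₂) (hL : 0 < L) (hj : 2 ≤ j) :
    (j : ℝ) ^ (-(θ * p)) * L ^ (-(2 * lam * p)) *
        ∫ r in Ioc (√(c₁ * log j / (L ^ 2 * j))) (c₂ / L), r ^ (d - 1 - 2 * lam * p)
      ≤ c₂ ^ (2 * (θ - lam) * p) * √(c₁ * log 2) ^ (d - 2 * θ * p) / (2 * θ * p - d) *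
          L ^ (-d) * (j : ℝ) ^ (-(d / 2)) := by
  set γ := d - 2 * θ * p
  set e := 2 * (θ - lam) * p
  set m := √(c₁ * log 2) * L⁻¹ * (j : ℝ) ^ (-(1 / 2) : ℝ)
  have hj0 : (0 : ℝ) < j := by positivity
  have hγ : γ < 0 := by linarith
  have hm : 0 < m := by positivity
  have hmR := sqrt_mul_log_two_mul_inv_le_sqrt_mul_log_div hc₁.le hL hj
  have hint : ∫ r in Ioc (√(c₁ * log j / (L ^ 2 * j))) (c₂ / L), r ^ (d - 1 - 2 * lam * p)
      ≤ (c₂ / L) ^ e * (m ^ γ / -γ) := calc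
    _ ≤ (c₂ / L) ^ e * ∫ r in Ioc (√(c₁ * log j / (L ^ 2 * j))) (c₂ / L), r ^ (γ - 1) := by
      have key := setIntegral_Ioc_rpow_le_rpow_mul (b := c₂ / L) (hm.trans_le hmR)
        (show γ - 1 ≤ d - 1 - 2 * lam * p by nlinarith)
      rwa [show d - 1 - 2 * lam * p - (γ - 1) = e by ring] at key
    _ ≤ (c₂ / L) ^ e * (m ^ γ / -γ) := by
      gcongr
      refine (setIntegral_Ioc_rpow_sub_one_le_of_neg (hm.trans_le hmR) hγ _).trans ?_
      exact div_le_div_of_nonneg_right (rpow_le_rpow_of_nonpos hm hmR hγ.le) (by linarith)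
  have hLpow : L ^ (-d) = L ^ (-(2 * lam * p)) / L ^ e / L ^ γ := by
    rw [← rpow_sub hL, ← rpow_sub hL]; congr 1; simp only [γ, e]; ring
  have hjpow : (j : ℝ) ^ (-(d / 2)) = (j : ℝ) ^ (-(θ * p)) * (j : ℝ) ^ (-(1 / 2) * γ) := by
    rw [← rpow_add hj0]; congr 1; simp only [γ]; ring
  calc _ ≤ (j : ℝ) ^ (-(θ * p)) * L ^ (-(2 * lam * p)) * ((c₂ / L) ^ e * (m ^ γ / -γ)) := by
        gcongr
    _ = _ := by
      rw [div_rpow hc₂.le hL.le, mul_rpow (by positivity) (by positivity),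
        mul_rpow (by positivity) (by positivity), inv_rpow hL.le, ← rpow_mul hj0.le, hLpow, hjpow,
        show 2 * θ * p - d = -γ by ring]
      ring

theorem radial_integral_le_of_lt_d (hα : 2 * lam * p < d) (hc₂ : 0 < c₂) (hL : 0 < L) :
    (j : ℝ) ^ (-(θ * p)) * L ^ (-(2 * lam * p)) *
        ∫ r in Ioc (√(c₁ * log j / (L ^ 2 * j))) (c₂ / L), r ^ (d - 1 - 2 * lam * p)
      ≤ c₂ ^ (d - 2 * lam * p) / (d - 2 * lam * p) * L ^ (-d) * (j : ℝ) ^ (-(θ * p)) := by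
  have hint : ∫ r in Ioc (√(c₁ * log j / (L ^ 2 * j))) (c₂ / L), r ^ (d - 1 - 2 * lam * p)
      ≤ (c₂ / L) ^ (d - 2 * lam * p) / (d - 2 * lam * p) := by
    rw [show d - 1 - 2 * lam * p = d - 2 * lam * p - 1 by ring]
    exact setIntegral_Ioc_rpow_sub_one_le_of_pos (sqrt_nonneg _) (by positivity) (by linarith)
  have hLpow : L ^ (-d) = L ^ (-(2 * lam * p)) / L ^ (d - 2 * lam * p) := by
    rw [← rpow_sub hL]; ring_nf
  calc _ ≤ (j : ℝ) ^ (-(θ * p)) * L ^ (-(2 * lam * p)) *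
        ((c₂ / L) ^ (d - 2 * lam * p) / (d - 2 * lam * p)) := by
        gcongr
    _ = _ := by
      rw [div_rpow hc₂.le hL.le, hLpow]
      ring

end RadialIntegral

theorem radial_integral_estimate_general (d : ℕ) (p θ lam c₁ c₂ : ℝ)
    (hp : 1 ≤ p) (hlamθ : lam < θ)
    (hc₁ : 0 < c₁) (hc₂ : 0 < c₂) :
    ∃ C : ℝ, 0 < C ∧ ∀ j : ℕ, 2 ≤ j → ∀ L : ℝ, 1 ≤ L →
      (j : ℝ) ^ (-(θ * p)) * L ^ (-(2 * lam * p)) *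
          ∫ r in Set.Ioc (Real.sqrt (c₁ * Real.log j / (L ^ 2 * j))) (c₂ / L),
            r ^ ((d : ℝ) - 1 - 2 * lam * p)
        ≤ C * L ^ (-(d : ℝ)) * (j : ℝ) ^ (-(min ((d : ℝ) / 2) (θ * p))) := by
  have hp0 : 0 < p := by linarith
  rcases lt_or_ge (d : ℝ) (2 * θ * p) with hdθ | hdθ
  · refine ⟨c₂ ^ (2 * (θ - lam) * p) * √(c₁ * log 2) ^ ((d : ℝ) - 2 * θ * p) / (2 * θ * p - d),
      by have := sub_pos.2 hdθ; positivity, fun j hj L hL => ?_⟩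
    rw [min_eq_left (by linarith)]
    exact radial_integral_le_of_d_lt hp0.le hlamθ.le hdθ hc₁ hc₂ (by linarith) hj
  · have hα : 2 * lam * p < d := by nlinarith
    refine ⟨c₂ ^ ((d : ℝ) - 2 * lam * p) / (d - 2 * lam * p),
      by have := sub_pos.2 hα; positivity, fun j _ L hL => ?_⟩
    rw [min_eq_right (by linarith)]
    exact radial_integral_le_of_lt_d hα hc₂ (by linarith)

/-- (Radial integral estimate for the region `R₃`.)
Let `d ≥ 1` and let `p ≥ 1`, `θ > 2`, `0 < λ < θ` and `c₁, c₂ > 0`.  Then there is a constant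
`C = C(d,p,θ,λ,c₁,c₂) > 0` such that for all integers `j ≥ 2` and all reals `L ≥ 1`:
`j^{−θp} L^{−2λp} ∫_{r₀}^{c₂/L} r^{d−1−2λp} dr ≤ C L^{−d} j^{−((d/2) ∧ (θp))}`,
where `r₀ = √(c₁ (log j)/(L²j))` (the integral over `Ioc r₀ (c₂/L)` being `0` when
`r₀ ≥ c₂/L`). -/
theorem radial_integral_estimate (d : ℕ) (hd : 1 ≤ d) (p θ lam c₁ c₂ : ℝ)
    (hp : 1 ≤ p) (hθ : 2 < θ) (hlam0 : 0 < lam) (hlamθ : lam < θ)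
    (hc₁ : 0 < c₁) (hc₂ : 0 < c₂) :
    ∃ C : ℝ, 0 < C ∧ ∀ j : ℕ, 2 ≤ j → ∀ L : ℝ, 1 ≤ L →
      (j : ℝ) ^ (-(θ * p)) * L ^ (-(2 * lam * p)) *
          ∫ r in Set.Ioc (Real.sqrt (c₁ * Real.log j / (L ^ 2 * j))) (c₂ / L),
            r ^ ((d : ℝ) - 1 - 2 * lam * p)
        ≤ C * L ^ (-(d : ℝ)) * (j : ℝ) ^ (-(min ((d : ℝ) / 2) (θ * p))) :=
  radial_integral_estimate_general d p θ lam c₁ c₂ hp hlamθ hc₁ hc₂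
end
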